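/- arXiv:1401.5958 — 3 statements merged into one kernel-verified Lean document; each statement's English description precedes it below -/
import Mathlib

section
/- For all non-negative integers n, p, q, r, k with p ≥ n: ∑_{j=0}^{p} (-1)^j * C(n+p+q+k+1, p-j) * C(q+j, j) * C(q+k+1+j, k) * S_r(n+r+q+k+1+j, r+q+k+1+j) = C(n+p+q+k+1, n+k) * S_r(n+k+r, k+r), where S_r is the r-Stirling number of the second kind. -/
/-- The unsigned `r`-Stirling number of the first kind. -/
def rStirling1 (r : ℕ) : ℕ → ℕ → ℕ
  | 0, k => if r = 0 ∧ k = 0 then 1 else 0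
  | n + 1, k =>
    if n + 1 < r then 0
    else if n + 1 = r then (if k = r then 1 else 0)
    else (if k = 0 then 0 else rStirling1 r n (k - 1)) + n * rStirling1 r n k

/-- The `r`-Stirling number of the second kind. -/
def rStirling2 (r : ℕ) : ℕ → ℕ → ℕ
  | 0, k => if r = 0 ∧ k = 0 then 1 else 0
  | n + 1, k =>
    if n + 1 < r then 0
    else if n + 1 = r then (if k = r then 1 else 0)
    else (if k = 0 then 0 else rStirling2 r n (k - 1)) + k * rStirling2 r n k

/-!
The function `t ↦ S_r(n + r + t, r + t)` is a linear combination of the binomials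
`t ↦ C(t + n, n + d)`, `d ≤ n`. This follows by induction on `n` from
`S_r(n + 1 + r + t, r + t) = ∑_{s ≤ t} (r + s) S_r(n + r + s, r + s)`, because that summation
operator sends `C(· + n, n + d)` to a combination of `C(· + n + 1, n + 1 + d)` and
`C(· + n + 1, n + 2 + d)`.

The identity is linear in the Stirling factor, so it suffices to prove it for these binomials.
There it is the vanishing of the `N`-th finite difference, `N = n + p + q + k + 1`, of the
polynomial `x ↦ C(q + x, q) C(q + k + 1 + x, k) C(q + k + 1 + n + x, n + d)`, whose degree
`q + k + n + d` is `< N` because `d ≤ n ≤ p`. The differences taken at `p` involve the values at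
`p, p - 1, …, 0`, which give the left-hand side, and at `-1, …, -(n + q + k + 1)`, which all
vanish except the one at `-(q + 1)`: that one gives the right-hand side.
-/

open Finset Polynomial Nat

lemma Nat.cast_sub_mul_choose {R : Type*} [CommRing R] (a e : ℕ) :
    ((a : R) - e) * a.choose e = (e + 1) * a.choose (e + 1) := by
  rcases le_or_gt e a with h | h
  · rw [← Nat.cast_sub h, ← Nat.cast_succ, ← Nat.cast_mul, ← Nat.cast_mul, mul_comm,
      ← choose_succ_right_eq, mul_comm]
  · rw [choose_eq_zero_of_lt h, choose_eq_zero_of_lt (by omega)]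
    simp

lemma sum_range_add_choose_of_le {n e : ℕ} (h : n ≤ e) (t : ℕ) :
    ∑ s ∈ range (t + 1), (s + n).choose e = (t + n + 1).choose (e + 1) := by
  induction t with
  | zero =>
    rw [sum_range_one, zero_add, choose_succ_succ',
      choose_eq_zero_of_lt (show n < e + 1 by omega), add_zero]
  | succ t ih => rw [sum_range_succ, ih, choose_succ_succ' (t + 1 + n), add_comm, add_right_comm]

theorem Polynomial.sum_range_neg_one_pow_mul_choose_mul_eval_sub {R : Type*} [CommRing R]
    {P : R[X]} {N : ℕ} (hP : P.natDegree < N) (x : R) :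
    ∑ i ∈ range (N + 1), (-1) ^ i * N.choose i * P.eval (x - i) = 0 := by
  have h := fwdDiff_iter_eq_sum_shift 1 P.eval N (x - N)
  rw [fwdDiff_iter_eq_zero_of_degree_lt hP, Pi.zero_apply, ← sum_range_reflect] at h
  convert h.symm using 2 with i hi
  have hiN : i ≤ N := by simp at hi; omega
  rw [show N + 1 - 1 - i = N - i by omega, Nat.sub_sub_self hiN, choose_symm hiN, zsmul_eq_mul,
    nsmul_one, Nat.cast_sub hiN]
  push_cast
  ring_nf

noncomputable def binomialPoly (c e : ℕ) : ℚ[X] :=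
  C (e ! : ℚ)⁻¹ * (descPochhammer ℚ e).comp (X + C (c : ℚ))

lemma binomialPoly_eval (c e : ℕ) (x : ℚ) :
    (binomialPoly c e).eval x = (descPochhammer ℚ e).eval (x + c) / e ! := by
  simp [binomialPoly, eval_comp, div_eq_inv_mul]

lemma natDegree_binomialPoly (c e : ℕ) : (binomialPoly c e).natDegree = e := by
  rw [binomialPoly, natDegree_C_mul (by positivity), natDegree_comp, descPochhammer_natDegree,
    natDegree_X_add_C, mul_one]

lemma binomialPoly_eval_of_add_eq {c e m : ℕ} {x : ℚ} (h : x + c = m) :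
    (binomialPoly c e).eval x = m.choose e := by
  rw [binomialPoly_eval, h, descPochhammer_eval_eq_descFactorial,
    descFactorial_eq_factorial_mul_choose]
  field_simp
  push_cast
  ring

lemma binomialPoly_eval_neg_succ (c e : ℕ) :
    (binomialPoly c e).eval (-(c + 1 : ℚ)) = (-1) ^ e := by
  have h := ascPochhammer_eval_neg_eq_descPochhammer ℚ (-1) e
  rw [neg_neg, ascPochhammer_eval_one] at h
  rw [binomialPoly_eval, show -((c : ℚ) + 1) + c = -1 by ring, div_eq_iff (by positivity), h,
    ← mul_assoc, ← mul_pow]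
  norm_num

lemma binomialPoly_eval_natCast (c e j : ℕ) :
    (binomialPoly c e).eval (j : ℚ) = (c + j).choose e :=
  binomialPoly_eval_of_add_eq (m := c + j) (by push_cast; ring)

lemma binomialPoly_eval_neg_of_lt {c e s : ℕ} (hs : s ≤ c) (hcs : c < s + e) :
    (binomialPoly c e).eval (-(s : ℚ)) = 0 := by
  rw [binomialPoly_eval_of_add_eq (m := c - s) (by push_cast [Nat.cast_sub hs]; ring),
    choose_eq_zero_of_lt (by omega), Nat.cast_zero]

noncomputable def chooseProductPoly (n q k d : ℕ) : ℚ[X] :=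
  binomialPoly q q * binomialPoly (q + k + 1) k * binomialPoly (q + k + 1 + n) (n + d)

lemma natDegree_chooseProductPoly_le (n q k d : ℕ) :
    (chooseProductPoly n q k d).natDegree ≤ q + k + (n + d) :=
  natDegree_mul_le_of_le (natDegree_mul_le_of_le (natDegree_binomialPoly _ _).le
    (natDegree_binomialPoly _ _).le) (natDegree_binomialPoly _ _).le

lemma chooseProductPoly_eval_natCast (n q k d j : ℕ) :
    (chooseProductPoly n q k d).eval (j : ℚ) =
      (q + j).choose j * (q + k + 1 + j).choose k * (q + k + 1 + j + n).choose (n + d) := by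
  simp only [chooseProductPoly, eval_mul, binomialPoly_eval_natCast]
  rw [choose_symm_add, add_right_comm _ n j]

lemma chooseProductPoly_eval_neg_succ (n q k d : ℕ) :
    (chooseProductPoly n q k d).eval (-(q + 1 : ℚ)) = (-1) ^ q * (k + n).choose (n + d) := by
  rw [chooseProductPoly, eval_mul, eval_mul, binomialPoly_eval_neg_succ,
    binomialPoly_eval_of_add_eq (m := k) (by push_cast; ring), choose_self, cast_one, mul_one,
    binomialPoly_eval_of_add_eq (m := k + n) (by push_cast; ring)]

lemma chooseProductPoly_eval_neg_eq_zero {n q k d s : ℕ} (hs : s < n + q + k + 1)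
    (hsq : s ≠ q) :
    (chooseProductPoly n q k d).eval (-((s + 1 : ℕ) : ℚ)) = 0 := by
  simp only [chooseProductPoly, eval_mul]
  rcases lt_or_gt_of_ne hsq with hsq | hsq
  · rw [binomialPoly_eval_neg_of_lt (by omega) (by omega), zero_mul, zero_mul]
  rcases le_or_gt s (q + k) with hsk | hsk
  · rw [binomialPoly_eval_neg_of_lt (c := q + k + 1) (by omega) (by omega), mul_zero, zero_mul]
  · rw [binomialPoly_eval_neg_of_lt (c := q + k + 1 + n) (by omega) (by omega), mul_zero]

lemma choose_selfdual_identity {n p q k d : ℕ} (hd : d ≤ n) (hp : n ≤ p) :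
    ∑ j ∈ range (p + 1), (-1 : ℚ) ^ j * ((n + p + q + k + 1).choose (p - j)) *
      ((q + j).choose j) * ((q + k + 1 + j).choose k) * ((q + k + 1 + j + n).choose (n + d))
    = ((n + p + q + k + 1).choose (n + k)) * ((k + n).choose (n + d)) := by
  set N := n + p + q + k + 1
  set G := chooseProductPoly n q k d
  have hG : G.natDegree < N := (natDegree_chooseProductPoly_le n q k d).trans_lt (by omega)
  have hhead : ∀ j ∈ range (p + 1),
      (-1 : ℚ) ^ (p - j) * N.choose (p - j) * G.eval ((p : ℚ) - (p - j : ℕ)) =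
        (-1) ^ p * ((-1 : ℚ) ^ j * (N.choose (p - j)) * ((q + j).choose j) *
          ((q + k + 1 + j).choose k) * ((q + k + 1 + j + n).choose (n + d))) := by
    intro j hj
    have hjp : j ≤ p := by simp at hj; omega
    rw [Nat.cast_sub hjp, sub_sub_cancel, chooseProductPoly_eval_natCast,
      ← pow_mul_pow_sub (-1 : ℚ) hjp]
    ring_nf
    simp [pow_mul']
  have htail : ∑ s ∈ range (n + q + k + 1), (-1 : ℚ) ^ (p + 1 + s) * N.choose (p + 1 + s) *
      G.eval ((p : ℚ) - (p + 1 + s : ℕ)) =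
        -(-1) ^ p * (N.choose (n + k) * (k + n).choose (n + d)) := by
    rw [sum_eq_single_of_mem q (by simp; omega)]
    · rw [show (p : ℚ) - (p + 1 + q : ℕ) = -(q + 1 : ℚ) by push_cast; ring,
        chooseProductPoly_eval_neg_succ,
        choose_symm_of_eq_add (show N = p + 1 + q + (n + k) by omega)]
      ring_nf
      simp [pow_mul']
    · intro s hs hsq
      rw [show (p : ℚ) - (p + 1 + s : ℕ) = -((s + 1 : ℕ) : ℚ) by push_cast; ring,
        chooseProductPoly_eval_neg_eq_zero (by simpa using hs) hsq, mul_zero]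
  have h := sum_range_neg_one_pow_mul_choose_mul_eval_sub hG (p : ℚ)
  rw [show N + 1 = (p + 1) + (n + q + k + 1) by omega, sum_range_add, ← sum_range_reflect] at h
  simp only [add_tsub_cancel_right] at h
  rwa [sum_congr rfl hhead, ← mul_sum, htail, neg_mul, ← sub_eq_add_neg, ← mul_sub,
    neg_one_pow_mul_eq_zero_iff, sub_eq_zero] at h

def chooseShift (n d t : ℕ) : ℚ := (t + n).choose (n + d)

def chooseSpan (n : ℕ) : Submodule ℚ (ℕ → ℚ) :=
  Submodule.span ℚ (chooseShift n '' Set.Iic n)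

def weightedPartialSum (r : ℕ) : (ℕ → ℚ) →ₗ[ℚ] ℕ → ℚ :=
  LinearMap.pi fun t => ∑ s ∈ range (t + 1), ((r : ℚ) + s) • LinearMap.proj s

lemma weightedPartialSum_apply (r : ℕ) (f : ℕ → ℚ) (t : ℕ) :
    weightedPartialSum r f t = ∑ s ∈ range (t + 1), ((r : ℚ) + s) * f s := by
  simp [weightedPartialSum]

lemma weightedPartialSum_chooseShift (r n d : ℕ) :
    weightedPartialSum r (chooseShift n d) =
      ((n + d + 1 : ℕ) : ℚ) • chooseShift (n + 1) (d + 1) +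
        ((r + d : ℕ) : ℚ) • chooseShift (n + 1) d := by
  funext t
  have hsplit : ∀ s, ((r : ℚ) + s) * chooseShift n d s =
      (n + d + 1 : ℕ) * ((s + n).choose (n + d + 1) : ℕ) +
        (r + d : ℕ) * ((s + n).choose (n + d) : ℕ) := by
    intro s
    have := Nat.cast_sub_mul_choose (R := ℚ) (s + n) (n + d)
    simp only [chooseShift]
    push_cast at this ⊢
    linear_combination this
  simp only [weightedPartialSum_apply, hsplit, sum_add_distrib, ← mul_sum, ← Nat.cast_sum,
    sum_range_add_choose_of_le (show n ≤ n + d + 1 by omega),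
    sum_range_add_choose_of_le le_self_add]
  simp only [chooseShift, Pi.add_apply, Pi.smul_apply, smul_eq_mul]
  ring_nf

lemma weightedPartialSum_mem_chooseSpan {n : ℕ} (r : ℕ) {f : ℕ → ℚ}
    (hf : f ∈ chooseSpan n) :
    weightedPartialSum r f ∈ chooseSpan (n + 1) := by
  refine (Submodule.map_span_le _ _ _).2 ?_ (Submodule.mem_map_of_mem hf)
  rintro _ ⟨d, hd, rfl⟩
  rw [weightedPartialSum_chooseShift]
  exact add_mem (Submodule.smul_mem _ _ (Submodule.subset_span ⟨d + 1, by simp_all, rfl⟩))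
    (Submodule.smul_mem _ _ (Submodule.subset_span ⟨d, by simp_all; omega, rfl⟩))

lemma selfdual_identity_of_mem_chooseSpan {n p q k : ℕ} {f : ℕ → ℚ}
    (hf : f ∈ chooseSpan n) (hp : n ≤ p) :
    ∑ j ∈ range (p + 1), (-1 : ℚ) ^ j * ((n + p + q + k + 1).choose (p - j)) *
      ((q + j).choose j) * ((q + k + 1 + j).choose k) * f (q + k + 1 + j)
    = ((n + p + q + k + 1).choose (n + k)) * f k := by
  let lhs : (ℕ → ℚ) →ₗ[ℚ] ℚ := ∑ j ∈ range (p + 1), ((-1 : ℚ) ^ j *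
    ((n + p + q + k + 1).choose (p - j)) * ((q + j).choose j) * ((q + k + 1 + j).choose k)) •
      LinearMap.proj (q + k + 1 + j)
  let rhs : (ℕ → ℚ) →ₗ[ℚ] ℚ :=
    ((n + p + q + k + 1).choose (n + k) : ℚ) • LinearMap.proj k
  have hgen : Set.EqOn lhs rhs (chooseShift n '' Set.Iic n) := by
    rintro _ ⟨d, hd, rfl⟩
    simpa [lhs, rhs, chooseShift] using choose_selfdual_identity hd hp
  simpa [lhs, rhs] using LinearMap.eqOn_span hgen hf

lemma rStirling2_succ {r m : ℕ} (h : r ≤ m) (c : ℕ) :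
    rStirling2 r (m + 1) c =
      (if c = 0 then 0 else rStirling2 r m (c - 1)) + c * rStirling2 r m c := by
  rw [rStirling2, if_neg (by omega), if_neg (by omega)]

lemma rStirling2_eq_zero_of_lt_right {r m c : ℕ} (h : c < r) : rStirling2 r m c = 0 := by
  induction m generalizing c with
  | zero => simp [rStirling2]; omega
  | succ m ih =>
    rw [rStirling2]
    split_ifs <;> first
      | rfl | omega | simp [ih h, ih (show c - 1 < r by omega)]

lemma rStirling2_eq_zero_of_lt {r m c : ℕ} (h : m < c) : rStirling2 r m c = 0 := by
  induction m generalizing c with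
  | zero => simp [rStirling2]; omega
  | succ m ih =>
    rw [rStirling2]
    split_ifs <;> first
      | rfl | omega | simp [ih (show m < c by omega), ih (show m < c - 1 by omega)]

lemma rStirling2_self_add (r t : ℕ) : rStirling2 r (r + t) (r + t) = 1 := by
  induction t with
  | zero => cases r <;> simp [rStirling2]
  | succ t ih =>
    rw [← add_assoc, rStirling2_succ (by omega), if_neg (by omega), add_tsub_cancel_right, ih,
      rStirling2_eq_zero_of_lt (by omega), mul_zero, add_zero]

lemma rStirling2_add_succ_eq_sum (r n t : ℕ) :
    rStirling2 r (n + 1 + r + t) (r + t) =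
      ∑ s ∈ range (t + 1), (r + s) * rStirling2 r (n + r + s) (r + s) := by
  induction t with
  | zero =>
    rw [show n + 1 + r + 0 = n + r + 1 by omega, rStirling2_succ (by omega)]
    rcases Nat.eq_zero_or_pos r with rfl | hr
    · simp
    · simp [rStirling2_eq_zero_of_lt_right (show r - 1 < r by omega)]
  | succ t ih =>
    rw [show n + 1 + r + (t + 1) = n + 1 + r + t + 1 by omega, rStirling2_succ (by omega),
      if_neg (by omega), show r + (t + 1) - 1 = r + t by omega, ih, sum_range_succ _ (t + 1),
      show n + r + (t + 1) = n + 1 + r + t by omega]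

def rStirling2Diagonal (r n t : ℕ) : ℚ := rStirling2 r (n + r + t) (r + t)

lemma rStirling2Diagonal_succ (r n : ℕ) :
    rStirling2Diagonal r (n + 1) = weightedPartialSum r (rStirling2Diagonal r n) := by
  funext t
  simp [weightedPartialSum_apply, rStirling2Diagonal, rStirling2_add_succ_eq_sum]

lemma rStirling2Diagonal_mem_chooseSpan (r n : ℕ) : rStirling2Diagonal r n ∈ chooseSpan n := by
  induction n with
  | zero =>
    have : rStirling2Diagonal r 0 = chooseShift 0 0 := by
      funext t
      simp [rStirling2Diagonal, chooseShift, rStirling2_self_add]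
    exact this ▸ Submodule.subset_span ⟨0, Set.mem_Iic.2 le_rfl, rfl⟩
  | succ n ih => exact rStirling2Diagonal_succ r n ▸ weightedPartialSum_mem_chooseSpan r ih

theorem rStirling2_selfdual_identity (n p q r k : ℕ) (hp : n ≤ p) :
    ∑ j ∈ Finset.range (p + 1),
      (-1 : ℤ) ^ j * ((n + p + q + k + 1).choose (p - j)) * ((q + j).choose j) *
        ((q + k + 1 + j).choose k) * rStirling2 r (n + r + q + k + 1 + j) (r + q + k + 1 + j)
    = ((n + p + q + k + 1).choose (n + k) : ℤ) * rStirling2 r (n + k + r) (k + r) := by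
  have h := selfdual_identity_of_mem_chooseSpan (q := q) (k := k)
    (rStirling2Diagonal_mem_chooseSpan r n) hp
  simp only [rStirling2Diagonal, ← add_assoc] at h
  rw [show n + k + r = n + r + k by omega, show k + r = r + k by omega]
  exact_mod_cast h
end

section
/- For all non-negative integers n and r, the value of the n-th Bernoulli polynomial at r satisfies B_n(r) = ∑_{j=0}^{n} (-1)^j * (j!/(j+1)) * S_r(n+r, j+r), where S_r denotes the r-Stirling number of the second kind and B_n(x) is defined by t e^{xt}/(e^t - 1) = ∑ B_n(x) t^n/n!. -/
open Finset Function fwdDiff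
open scoped Nat

section rStirling2

variable {r : ℕ}

theorem rStirling2_eq_zero_of_lt_s14 {n k : ℕ} (hk : k < r) : rStirling2 r n k = 0 := by
  induction n generalizing k with
  | zero => simp only [rStirling2]; split_ifs <;> omega
  | succ n ih =>
    rw [rStirling2]
    split_ifs <;> first | omega | simp [ih hk, ih (k := k - 1) (by omega)]

theorem rStirling2_self (k : ℕ) : rStirling2 r r k = if k = r then 1 else 0 := by
  cases r <;> simp [rStirling2]

theorem rStirling2_succ_succ {n : ℕ} (h : r ≤ n) (k : ℕ) :
    rStirling2 r (n + 1) (k + 1) = rStirling2 r n k + (k + 1) * rStirling2 r n (k + 1) := by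
  rw [rStirling2, if_neg (by omega), if_neg (by omega), if_neg k.succ_ne_zero, k.add_sub_cancel]

theorem rStirling2_succ_self {n : ℕ} (h : r ≤ n) :
    rStirling2 r (n + 1) r = r * rStirling2 r n r := by
  cases r with
  | zero => simp [rStirling2]
  | succ s => rw [rStirling2_succ_succ h, rStirling2_eq_zero_of_lt_s14 (lt_add_one s), zero_add]

end rStirling2

section fwdDiff

variable {R : Type*} [CommRing R]

theorem fwdDiff_iter_succ_id_mul (f : R → R) (j : ℕ) (x : R) :
    Δ_[1] ^[j + 1] (fun y ↦ y * f y) x =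
      (x + (j + 1)) * Δ_[1] ^[j + 1] f x + (j + 1) * Δ_[1] ^[j] f x := by
  induction j generalizing x with
  | zero => simp only [iterate_succ_apply, iterate_zero_apply, fwdDiff]; push_cast; ring
  | succ j ih =>
    rw [iterate_succ_apply', funext ih]
    simp only [fwdDiff, iterate_succ_apply']
    push_cast; ring

theorem fwdDiff_pow_succ (n : ℕ) :
    Δ_[1] (fun y : R ↦ y ^ (n + 1)) =
      ∑ k ∈ range (n + 1), ((n + 1).choose k : R) • fun y ↦ y ^ k := by
  ext x
  simp [fwdDiff, add_pow, sum_range_succ, mul_comm]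

theorem fwdDiff_iter_succ_pow_succ (j n : ℕ) (x : R) :
    Δ_[1] ^[j + 1] (fun y : R ↦ y ^ (n + 1)) x =
      ∑ k ∈ range (n + 1), (n + 1).choose k * Δ_[1] ^[j] (fun y : R ↦ y ^ k) x := by
  rw [iterate_succ_apply, fwdDiff_pow_succ, fwdDiff_iter_finsetSum, Finset.sum_apply]
  simp only [fwdDiff_iter_const_smul, Pi.smul_apply, smul_eq_mul]

theorem factorial_mul_rStirling2_eq_fwdDiff_iter_pow (r m j : ℕ) :
    (j ! * rStirling2 r (m + r) (j + r) : R) = Δ_[1] ^[j] (fun y : R ↦ y ^ m) r := by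
  induction m generalizing j with
  | zero =>
    rcases j with _ | j
    · simp [rStirling2_self]
    · rw [fwdDiff_iter_pow_eq_zero_of_lt j.succ_pos]
      simp [rStirling2_self]
  | succ m ih =>
    rw [add_right_comm]
    rcases j with _ | j
    · have h0 := ih 0
      simp only [Nat.factorial_zero, Nat.cast_one, one_mul, zero_add, iterate_zero_apply] at h0
      simp [rStirling2_succ_self, _root_.pow_succ', h0]
    · simp_rw [_root_.pow_succ', fwdDiff_iter_succ_id_mul, ← ih, add_right_comm j 1 r,
        rStirling2_succ_succ le_add_self, Nat.factorial_succ]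
      push_cast; ring

end fwdDiff

theorem sum_neg_one_pow_div_mul_fwdDiff_iter_succ_pow_succ {K : Type*} [Field K] [CharZero K]
    (m : ℕ) (x : K) :
    ∑ j ∈ range (m + 1), (-1) ^ j / (j + 1) * Δ_[1] ^[j + 1] (fun y : K ↦ y ^ (m + 1)) x =
      (m + 1) * x ^ m := by
  induction m with
  | zero => simp [fwdDiff]
  | succ m ih =>
    set A : ℕ → K := fun j ↦ (-1) ^ j * Δ_[1] ^[j] (fun y : K ↦ y ^ (m + 1)) x
    have hterm : ∀ j : ℕ, (-1) ^ j / (j + 1) * Δ_[1] ^[j + 1] (fun y : K ↦ y ^ (m + 1 + 1)) x =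
        x * ((-1) ^ j / (j + 1) * Δ_[1] ^[j + 1] (fun y : K ↦ y ^ (m + 1)) x) +
          (A j - A (j + 1)) := by
      intro j
      simp_rw [_root_.pow_succ' _ (m + 1), fwdDiff_iter_succ_id_mul]
      simp only [A]
      field_simp
      ring
    have hlast : Δ_[1] ^[m + 2] (fun y : K ↦ y ^ (m + 1)) = 0 :=
      fwdDiff_iter_pow_eq_zero_of_lt (by omega)
    rw [sum_congr rfl fun j _ ↦ hterm j, sum_add_distrib, ← mul_sum, sum_range_sub',
      sum_range_succ, ih, hlast]
    simp [A, hlast]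
    ring

theorem eq_bernoulli_eval_of_sum_choose_mul (x : ℚ) (P : ℕ → ℚ)
    (hP : ∀ n, ∑ k ∈ range (n + 1), ((n + 1).choose k : ℚ) * P k = (n + 1) * x ^ n) (n : ℕ) :
    P n = (Polynomial.bernoulli n).eval x := by
  induction n using Nat.strong_induction_on with
  | _ n ih =>
    have hB : ∑ k ∈ range (n + 1), ((n + 1).choose k : ℚ) * (Polynomial.bernoulli k).eval x =
        (n + 1) * x ^ n := by
      simpa only [Polynomial.eval_finsetSum, Polynomial.eval_smul, smul_eq_mul,
        Polynomial.eval_monomial] using congrArg (Polynomial.eval x) (Polynomial.sum_bernoulli n)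
    have h := (hP n).trans hB.symm
    rw [sum_range_succ, sum_range_succ, sum_congr rfl fun k hk ↦ by rw [ih k (mem_range.mp hk)],
      add_right_inj] at h
    exact mul_left_cancel₀ (by rw [Nat.choose_succ_self_right]; positivity) h

theorem sum_choose_mul_sum_fwdDiff_iter_pow (x : ℚ) (n : ℕ) :
    ∑ k ∈ range (n + 1), ((n + 1).choose k : ℚ) *
        ∑ j ∈ range (k + 1), (-1) ^ j / (j + 1) * Δ_[1] ^[j] (fun y : ℚ ↦ y ^ k) x =
      (n + 1) * x ^ n := by
  have extend : ∀ k ∈ range (n + 1),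
      ∑ j ∈ range (k + 1), (-1) ^ j / (j + 1) * Δ_[1] ^[j] (fun y : ℚ ↦ y ^ k) x =
        ∑ j ∈ range (n + 1), (-1) ^ j / (j + 1) * Δ_[1] ^[j] (fun y : ℚ ↦ y ^ k) x := by
    intro k hk
    refine sum_subset (range_subset_range.mpr (by simpa using hk)) fun j hj hjk ↦ ?_
    rw [fwdDiff_iter_pow_eq_zero_of_lt (by simp_all), Pi.zero_apply, mul_zero]
  calc _ = ∑ j ∈ range (n + 1), (-1) ^ j / (j + 1) *
          ∑ k ∈ range (n + 1), ((n + 1).choose k : ℚ) * Δ_[1] ^[j] (fun y : ℚ ↦ y ^ k) x := by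
        rw [sum_congr rfl fun k hk ↦ by rw [extend k hk]]
        simp_rw [mul_sum]
        rw [sum_comm]
        exact sum_congr rfl fun _ _ ↦ sum_congr rfl fun _ _ ↦ by ring
    _ = _ := by
        simp_rw [← fwdDiff_iter_succ_pow_succ]
        exact sum_neg_one_pow_div_mul_fwdDiff_iter_succ_pow_succ n x

theorem bernoulli_eval_eq_sum_fwdDiff_iter_pow (n : ℕ) (x : ℚ) :
    (Polynomial.bernoulli n).eval x =
      ∑ j ∈ range (n + 1), (-1) ^ j / (j + 1) * Δ_[1] ^[j] (fun y : ℚ ↦ y ^ n) x :=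
  (eq_bernoulli_eval_of_sum_choose_mul x _ (sum_choose_mul_sum_fwdDiff_iter_pow x) n).symm

theorem bernoulli_poly_eq_sum_rStirling2 (n r : ℕ) :
    (Polynomial.bernoulli n).eval (r : ℚ) =
      ∑ j ∈ Finset.range (n + 1),
        (-1 : ℚ) ^ j * ((j.factorial : ℚ) / (j + 1)) * rStirling2 r (n + r) (j + r) := by
  rw [bernoulli_eval_eq_sum_fwdDiff_iter_pow]
  refine sum_congr rfl fun j _ ↦ ?_
  rw [← factorial_mul_rStirling2_eq_fwdDiff_iter_pow]
  ring
end

section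
/- For all integers n ≥ 1 and all natural numbers r, the n-th ordinary Bernoulli polynomial evaluated at -r satisfies B_n(-r) = n * ∑_{j=0}^{n} ((-1)^{n+j} / (n+j)) * C(2n, n+j) * s_{r+1}(n+r+j+1, r+j+1), where s_{r+1} denotes the unsigned (r+1)-Stirling number of the first kind. -/
/-!
By the defining recursion, `s_{r+1}(r+1+i, r+1+k) = e_{i-k}(r+1, …, r+i)`, so the sum only involves
`f(i) = e_n(r+1, …, r+i)` at `i = n + j`. Newton's identities together with Faulhaber's formula show
that `f` is a polynomial in `i` of degree at most `2n` whose linear coefficient is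
`(-1)^(n-1) B_n(r+1) / n`; moreover `f` vanishes at `0, …, n-1`. The `2n`-th forward difference
of the polynomial `f(i)/i`, of degree `< 2n`, vanishes: of its terms only `i = 0`, which contributes
the linear coefficient of `f`, and `i = n, …, 2n` survive. The reflection
`B_n(r+1) = (-1)^n B_n(-r)` finishes the proof.
-/

open Polynomial

namespace Multiset

variable {R : Type*}

theorem esymm_cons_succ [CommSemiring R] (a : R) (s : Multiset R) (n : ℕ) :
    (a ::ₘ s).esymm (n + 1) = s.esymm (n + 1) + a * s.esymm n := by
  simp [esymm, map_map, sum_map_mul_left]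

theorem esymm_eq_zero_of_card_lt [CommSemiring R] {s : Multiset R} {n : ℕ}
    (h : card s < n) : s.esymm n = 0 := by
  simp [esymm, powersetCard_eq_empty n h]

theorem mul_esymm_eq_sum [CommRing R] (s : Multiset R) (n : ℕ) :
    (n + 1) * s.esymm (n + 1) =
      ∑ u ∈ Finset.range (n + 1), (-1) ^ u * (s.map (· ^ (u + 1))).sum * s.esymm (n - u) := by
  classical
  have hpsum (k : ℕ) : MvPolynomial.aeval (fun x : s ↦ (x : R)) (MvPolynomial.psum s R k) =
      (s.map (· ^ k)).sum := by
    rw [MvPolynomial.psum, map_sum, ← map_univ s (· ^ k), Finset.sum_eq_multiset_sum]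
    simp
  have h := congrArg (MvPolynomial.aeval (fun x : s ↦ (x : R)))
    (MvPolynomial.mul_esymm_eq_sum s R (n + 1))
  simp only [map_mul, map_natCast, map_pow, map_neg, map_one, map_sum, hpsum,
    MvPolynomial.aeval_esymm_eq_multiset_esymm, map_univ_coe] at h
  rw [Finset.sum_filter, Finset.Nat.sum_antidiagonal_eq_sum_range_succ
    (fun i j ↦ if i < n + 1 then (-1) ^ i * s.esymm i * (s.map (· ^ j)).sum else 0),
    Finset.sum_range_succ, if_neg (lt_irrefl _), add_zero, ← Finset.sum_range_reflect] at h
  push_cast at h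
  rw [h, Finset.mul_sum]
  refine Finset.sum_congr rfl fun u hu ↦ ?_
  have hu := Finset.mem_range.mp hu
  have hsign : (-1 : R) ^ (n + 1 + 1) * (-1) ^ (n - u) = (-1) ^ u := by
    rw [← pow_add, neg_one_pow_eq_pow_mod_two, neg_one_pow_eq_pow_mod_two u]
    congr 1
    omega
  rw [if_pos (by omega), show n + 1 - (n - u) = u + 1 by omega, ← hsign]
  ring

end Multiset

def shiftedRange {R : Type*} [AddMonoidWithOne R] (a : R) (i : ℕ) : Multiset R :=
  (Multiset.range i).map (fun j : ℕ ↦ a + j)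

section shiftedRange

variable {R : Type*}

@[simp]
theorem card_shiftedRange [AddMonoidWithOne R] (a : R) (i : ℕ) :
    Multiset.card (shiftedRange a i) = i := by
  simp [shiftedRange]

theorem shiftedRange_succ [AddMonoidWithOne R] (a : R) (i : ℕ) :
    shiftedRange a (i + 1) = (a + i) ::ₘ shiftedRange a i := by
  simp [shiftedRange, Multiset.range_succ]

theorem esymm_shiftedRange_succ_succ [CommSemiring R] (a : R) (i n : ℕ) :
    (shiftedRange a (i + 1)).esymm (n + 1) =
      (shiftedRange a i).esymm (n + 1) + (a + i) * (shiftedRange a i).esymm n := by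
  rw [shiftedRange_succ, Multiset.esymm_cons_succ]

end shiftedRange

theorem rStirling1_eq_zero_of_lt (r : ℕ) {m k : ℕ} (h : m < k) : rStirling1 r m k = 0 := by
  induction m generalizing k with
  | zero => simp [rStirling1]; omega
  | succ m ih =>
    rw [rStirling1]
    split_ifs
    all_goals try omega
    rw [ih (by omega : m < k), ih (by omega : m < k - 1), mul_zero, add_zero]

theorem rStirling1_eq_zero_of_right_lt {r k : ℕ} (m : ℕ) (h : k < r) : rStirling1 r m k = 0 := by
  induction m generalizing k with
  | zero => simp [rStirling1]; omega
  | succ m ih =>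
    rw [rStirling1]
    split_ifs
    all_goals try omega
    · rw [ih h, mul_zero, add_zero]
    · rw [ih h, ih (by omega : k - 1 < r), mul_zero, add_zero]

theorem rStirling1_self (r : ℕ) : rStirling1 r r r = 1 := by
  cases r <;> simp [rStirling1]

theorem rStirling1_succ_succ {r n : ℕ} (k : ℕ) (h : r ≤ n) :
    rStirling1 r (n + 1) (k + 1) = rStirling1 r n k + n * rStirling1 r n (k + 1) := by
  rw [rStirling1, if_neg (by omega), if_neg (by omega), if_neg k.succ_ne_zero, Nat.add_sub_cancel]

theorem rStirling1_succ_left_self {r n : ℕ} (h : r ≤ n) :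
    rStirling1 r (n + 1) r = n * rStirling1 r n r := by
  rw [rStirling1, if_neg (by omega), if_neg (by omega)]
  split_ifs with hr
  · rw [zero_add]
  · rw [rStirling1_eq_zero_of_right_lt n (by omega), zero_add]

theorem rStirling1_add_eq_esymm {R : Type*} [CommSemiring R] (r : ℕ) {i k : ℕ} (h : k ≤ i) :
    (rStirling1 r (r + i) (r + k) : R) = (shiftedRange (r : R) i).esymm (i - k) := by
  induction i generalizing k with
  | zero =>
    obtain rfl : k = 0 := by omega
    simp [rStirling1_self, Multiset.esymm]
  | succ i ih =>
    rw [← add_assoc]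
    rcases k with _ | k
    · have hi := ih (Nat.zero_le i)
      rw [add_zero] at hi ⊢
      rw [rStirling1_succ_left_self (by omega), Nat.sub_zero, esymm_shiftedRange_succ_succ,
        Multiset.esymm_eq_zero_of_card_lt (by simp), Nat.cast_mul, hi, Nat.sub_zero]
      push_cast
      ring
    rw [← add_assoc, rStirling1_succ_succ _ (by omega), Nat.add_sub_add_right, Nat.cast_add,
      Nat.cast_mul, ih (by omega)]
    rcases Nat.lt_or_eq_of_le h with hk | hk
    · rw [add_assoc r k 1, ih (by omega), show i - k = i - (k + 1) + 1 by omega,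
        esymm_shiftedRange_succ_succ]
      push_cast
      ring
    · obtain rfl : k = i := by omega
      rw [rStirling1_eq_zero_of_lt _ (by omega)]
      simp [Multiset.esymm]

theorem Polynomial.coeff_one_mul {R : Type*} [Semiring R] (p q : R[X]) :
    (p * q).coeff 1 = p.coeff 0 * q.coeff 1 + p.coeff 1 * q.coeff 0 := by
  simp [coeff_mul, Finset.Nat.antidiagonal_succ]

noncomputable def powerSumPoly (a : ℚ) (u : ℕ) : ℚ[X] :=
  C (u + 1 : ℚ)⁻¹ *
    ((Polynomial.bernoulli (u + 1)).comp (X + C a) - C ((Polynomial.bernoulli (u + 1)).eval a))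

theorem eval_powerSumPoly (a : ℚ) (u i : ℕ) :
    (powerSumPoly a u).eval (i : ℚ) = ((shiftedRange a i).map (· ^ u)).sum := by
  induction i with
  | zero => simp [powerSumPoly, shiftedRange]
  | succ i ih =>
    rw [shiftedRange_succ, Multiset.map_cons, Multiset.sum_cons, ← ih]
    simp only [powerSumPoly, eval_mul, eval_C, eval_sub, eval_comp, eval_add, eval_X]
    rw [Nat.cast_succ, show (i : ℚ) + 1 + a = 1 + (i + a) by ring, bernoulli_eval_one_add,
      Nat.add_sub_cancel, add_comm (i : ℚ) a]
    field_simp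
    push_cast
    ring

theorem coeff_zero_powerSumPoly (a : ℚ) (u : ℕ) : (powerSumPoly a u).coeff 0 = 0 := by
  simpa [coeff_zero_eq_eval_zero, shiftedRange] using eval_powerSumPoly a u 0

theorem coeff_one_powerSumPoly (a : ℚ) (u : ℕ) :
    (powerSumPoly a u).coeff 1 = (Polynomial.bernoulli u).eval a := by
  rw [powerSumPoly, coeff_C_mul, coeff_sub, coeff_C, ← taylor_apply, taylor_coeff_one,
    derivative_bernoulli_add_one, if_neg one_ne_zero, sub_zero, eval_mul]
  simp only [eval_add, eval_natCast, eval_one]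
  exact inv_mul_cancel_left₀ (Nat.cast_add_one_ne_zero u) _

theorem Polynomial.natDegree_bernoulli_le (n : ℕ) : (Polynomial.bernoulli n).natDegree ≤ n :=
  natDegree_sum_le_of_forall_le _ _ fun i hi ↦
    (natDegree_monomial_le _).trans (by have := Finset.mem_range.mp hi; omega)

theorem natDegree_powerSumPoly_le (a : ℚ) (u : ℕ) : (powerSumPoly a u).natDegree ≤ u + 1 := by
  refine (natDegree_C_mul_le _ _).trans <| (natDegree_sub_le _ _).trans <| max_le ?_ (by simp)
  rw [natDegree_comp, natDegree_X_add_C, mul_one]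
  exact natDegree_bernoulli_le _

/-- Newton's identities, read as a recursion in `n`, with the power sums replaced by their
Faulhaber polynomials. -/
noncomputable def esymmPoly (a : ℚ) : ℕ → ℚ[X]
  | 0 => 1
  | n + 1 => C (n + 1 : ℚ)⁻¹ *
      ∑ u ∈ Finset.range (n + 1), C ((-1) ^ u) * powerSumPoly a (u + 1) * esymmPoly a (n - u)
  decreasing_by omega

theorem eval_esymmPoly (a : ℚ) (n i : ℕ) :
    (esymmPoly a n).eval (i : ℚ) = (shiftedRange a i).esymm n := by
  induction n using Nat.strong_induction_on with
  | _ n ih =>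
    rcases n with _ | n
    · simp [esymmPoly, Multiset.esymm]
    rw [esymmPoly, eval_mul, eval_C, eval_finsetSum, inv_mul_eq_iff_eq_mul₀ (by positivity),
      Multiset.mul_esymm_eq_sum]
    refine Finset.sum_congr rfl fun u _ ↦ ?_
    rw [eval_mul, eval_mul, eval_C, eval_powerSumPoly, ih _ (by omega)]

theorem coeff_zero_esymmPoly_succ (a : ℚ) (n : ℕ) : (esymmPoly a (n + 1)).coeff 0 = 0 := by
  rw [coeff_zero_eq_eval_zero, ← Nat.cast_zero, eval_esymmPoly,
    Multiset.esymm_eq_zero_of_card_lt (by simp), Nat.cast_zero]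

theorem coeff_one_esymmPoly_succ (a : ℚ) (n : ℕ) :
    (n + 1) * (esymmPoly a (n + 1)).coeff 1 =
      (-1) ^ n * (Polynomial.bernoulli (n + 1)).eval a := by
  rw [esymmPoly, coeff_C_mul, ← mul_assoc, mul_inv_cancel₀ (by positivity), one_mul,
    finsetSum_coeff, Finset.sum_eq_single_of_mem n (Finset.self_mem_range_succ n)]
  · rw [Nat.sub_self, coeff_one_mul, coeff_C_mul, coeff_C_mul, coeff_zero_powerSumPoly,
      coeff_one_powerSumPoly]
    simp [esymmPoly]
  · intro u hu hun
    rw [coeff_one_mul, coeff_C_mul, coeff_C_mul, coeff_zero_powerSumPoly,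
      show n - u = n - u - 1 + 1 by have := Finset.mem_range.mp hu; omega,
      coeff_zero_esymmPoly_succ]
    simp

theorem natDegree_esymmPoly_le (a : ℚ) (n : ℕ) : (esymmPoly a n).natDegree ≤ 2 * n := by
  induction n using Nat.strong_induction_on with
  | _ n ih =>
    rcases n with _ | n
    · simp [esymmPoly]
    rw [esymmPoly]
    refine (natDegree_C_mul_le _ _).trans <| natDegree_sum_le_of_forall_le _ _ fun u hu ↦ ?_
    have hu := Finset.mem_range.mp hu
    calc _ ≤ (C ((-1 : ℚ) ^ u) * powerSumPoly a (u + 1)).natDegree +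
            (esymmPoly a (n - u)).natDegree := natDegree_mul_le
      _ ≤ (u + 1 + 1) + 2 * (n - u) :=
          add_le_add ((natDegree_C_mul_le _ _).trans (natDegree_powerSumPoly_le a (u + 1)))
            (ih (n - u) (by omega))
      _ ≤ 2 * (n + 1) := by omega

theorem Polynomial.sum_range_neg_one_pow_mul_choose_mul_eval_eq_zero {R : Type*} [CommRing R]
    {f : R[X]} {m : ℕ} (h : f.natDegree < m) :
    ∑ i ∈ Finset.range (m + 1), (-1) ^ i * (m.choose i : R) * f.eval (i : R) = 0 := by
  have hdiff := congrFun (fwdDiff_iter_eq_zero_of_degree_lt h) 0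
  rw [fwdDiff_iter_eq_sum_shift, Pi.zero_apply] at hdiff
  rw [← mul_zero ((-1 : R) ^ m), ← hdiff, Finset.mul_sum]
  refine Finset.sum_congr rfl fun i hi ↦ ?_
  have hsign : (-1 : R) ^ i = (-1) ^ m * (-1) ^ (m - i) := by
    rw [← pow_add, neg_one_pow_eq_pow_mod_two, neg_one_pow_eq_pow_mod_two (m + _)]
    congr 1
    have := Finset.mem_range.mp hi
    omega
  simp [hsign, zsmul_eq_mul, mul_assoc]

theorem sum_neg_one_pow_div_mul_choose_mul_eval_eq_neg_coeff_one {f : ℚ[X]} {n : ℕ} (hn : 0 < n)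
    (hdeg : f.natDegree ≤ 2 * n) (hzero : ∀ i < n, f.eval (i : ℚ) = 0) :
    ∑ j ∈ Finset.range (n + 1), ((-1 : ℚ) ^ (n + j) / (n + j)) * ((2 * n).choose (n + j)) *
      f.eval ((n + j : ℕ) : ℚ) = -f.coeff 1 := by
  have hf : X * f.divX = f := by
    have h0 : f.coeff 0 = 0 := by simpa [coeff_zero_eq_eval_zero] using hzero 0 hn
    simpa [h0] using X_mul_divX_add f
  have hmul (i : ℕ) : (i : ℚ) * f.divX.eval (i : ℚ) = f.eval (i : ℚ) := by
    conv_rhs => rw [← hf]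
    rw [eval_mul, eval_X]
  have hsum := sum_range_neg_one_pow_mul_choose_mul_eval_eq_zero
    (f := f.divX) (m := 2 * n) (by rw [natDegree_divX_eq_natDegree_tsub_one]; omega)
  rw [show 2 * n + 1 = n + (n + 1) by omega, Finset.sum_range_add,
    Finset.sum_eq_single_of_mem 0 (Finset.mem_range.mpr hn)] at hsum
  · rw [eq_neg_iff_add_eq_zero, add_comm, ← hsum]
    congr 1
    · simp [← coeff_zero_eq_eval_zero, coeff_divX]
    refine Finset.sum_congr rfl fun j _ ↦ ?_
    have hnj : (n + j : ℚ) ≠ 0 := by positivity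
    rw [← hmul, Nat.cast_add]
    field_simp
  · intro i hi hi0
    have : f.divX.eval (i : ℚ) = 0 := by
      have := hmul i
      rw [hzero i (Finset.mem_range.mp hi)] at this
      exact (mul_eq_zero.mp this).resolve_left (Nat.cast_ne_zero.mpr hi0)
    rw [this, mul_zero]

theorem bernoulli_poly_at_neg_nat_eq_sum_rStirling1 (n r : ℕ) (hn : 1 ≤ n) :
    (Polynomial.bernoulli n).eval (-(r : ℚ)) =
      (n : ℚ) * ∑ j ∈ Finset.range (n + 1),
        ((-1 : ℚ) ^ (n + j) / (n + j)) * ((2 * n).choose (n + j)) *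
          rStirling1 (r + 1) (n + r + j + 1) (r + j + 1) := by
  set f := esymmPoly ((r + 1 : ℕ) : ℚ) n
  have hstirling (j : ℕ) :
      (rStirling1 (r + 1) (n + r + j + 1) (r + j + 1) : ℚ) = f.eval ((n + j : ℕ) : ℚ) := by
    rw [eval_esymmPoly, show n + r + j + 1 = r + 1 + (n + j) by omega, add_right_comm r j 1,
      rStirling1_add_eq_esymm _ (by omega), Nat.add_sub_cancel]
  have hzero (i : ℕ) (hi : i < n) : f.eval (i : ℚ) = 0 := by
    rw [eval_esymmPoly, Multiset.esymm_eq_zero_of_card_lt (by simpa)]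
  simp_rw [hstirling]
  rw [sum_neg_one_pow_div_mul_choose_mul_eval_eq_neg_coeff_one hn (natDegree_esymmPoly_le _ n)
    hzero]
  obtain ⟨m, rfl⟩ : ∃ m, n = m + 1 := ⟨n - 1, by omega⟩
  have hcoeff := coeff_one_esymmPoly_succ ((r + 1 : ℕ) : ℚ) m
  have hreflect := bernoulli_eval_one_sub (m + 1) (-(r : ℚ))
  push_cast at hcoeff hreflect ⊢
  rw [sub_neg_eq_add, add_comm] at hreflect
  rw [mul_neg, hcoeff, hreflect, ← mul_assoc, ← pow_add, neg_one_pow_eq_pow_mod_two,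
    show (m + (m + 1)) % 2 = 1 by omega]
  ring
end
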